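/- Suppose the payoff function is linear in beliefs: w(μ, θ_i) = ∑_j μ(θ_j) ρ(θ_j) = μᵀρ for a fixed vector ρ ∈ ℝ^N. Then w ∈ W if and only if there exists a completely positive matrix C ∈ ℝ^{N×N} with C·e = μ₀ (rows summing to the prior) such that w = D₀ C ρ, where D₀ is the diagonal matrix with entries 1/μ₀(θ_i) and e is the all-ones vector. -/

import Mathlib

/-!
A signal `s` with joint probabilities `a_j = μ₀(θ_j) π(s | θ_j)` contributes the matrix
`P(s) q qᵀ = a aᵀ / ∑ a`, where `q` is its posterior. Summing over signals gives a matrix `C`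
with row sums `μ₀` and `μ₀ᵢ wᵢ = (C ρ)ᵢ`. Since the prior is a probability vector, `C` is a
countable convex combination of the matrices `q qᵀ` with `q` in the simplex; this set is compact,
so by Carathéodory its convex hull is compact, hence closed, and `C` is a finite convex combination,
i.e. completely positive. Conversely, a factorization `C = ∑ₘ xₘ xₘᵀ` is realized by the signal
`m` with `π(m | θᵢ) = xₘᵢ (∑ₖ xₘₖ) / μ₀ᵢ`, whose posterior is `xₘ / ∑ₖ xₘₖ`.
-/

open Filter Matrix Topology

def CompletelyPositive {N : ℕ} (C : Matrix (Fin N) (Fin N) ℝ) : Prop :=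
  ∃ (M : ℕ) (x : Fin M → Fin N → ℝ), (∀ m i, 0 ≤ x m i) ∧
    C = ∑ m, Matrix.vecMulVec (x m) (x m)

theorem Convex.mem_of_hasSum {ι E : Type*} [AddCommGroup E] [Module ℝ E] [TopologicalSpace E]
    [ContinuousSMul ℝ E] {T : Set E} (hT : Convex ℝ T) (hT' : IsClosed T) {c : ι → ℝ} {p : ι → E}
    (hc₀ : ∀ i, 0 ≤ c i) (hc₁ : HasSum c 1) (hp : ∀ i, c i ≠ 0 → p i ∈ T) {z : E}
    (hz : HasSum (fun i => c i • p i) z) : z ∈ T := by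
  classical
  -- The normalized partial sums are centers of mass of points of `T`.
  have hlim : Tendsto (fun F : Finset ι => F.centerMass c p) atTop (𝓝 z) := by
    simpa [Finset.centerMass] using (hc₁.inv₀ one_ne_zero).smul hz
  refine hT'.mem_of_tendsto hlim ?_
  filter_upwards [hc₁.eventually (lt_mem_nhds one_pos)] with F hF
  rw [← Finset.centerMass_filter_ne_zero]
  refine hT.centerMass_mem (fun i _ => hc₀ i) ?_ fun i hi => hp i (Finset.mem_filter.1 hi).2
  rwa [Finset.sum_filter_ne_zero]

theorem isCompact_convexHull_of_isCompact {E : Type*} [AddCommGroup E] [Module ℝ E]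
    [TopologicalSpace E] [ContinuousAdd E] [ContinuousSMul ℝ E] [FiniteDimensional ℝ E]
    {K : Set E} (hK : IsCompact K) : IsCompact (convexHull ℝ K) := by
  let combo (k : ℕ) (wz : (Fin k → ℝ) × (Fin k → E)) : E := ∑ i, wz.1 i • wz.2 i
  let D (k : ℕ) := stdSimplex ℝ (Fin k) ×ˢ Set.univ.pi fun _ : Fin k => K
  -- Carathéodory: `finrank ℝ E + 1` points suffice.
  have hull_eq :
      convexHull ℝ K = ⋃ k ∈ Finset.range (Module.finrank ℝ E + 2), combo k '' D k := by
    apply Set.Subset.antisymm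
    · intro x hx
      obtain ⟨ι, _, z, w, hzK, hind, hw₀, hw₁, rfl⟩ := eq_pos_convex_span_of_mem_convexHull hx
      let e := (Fintype.equivFin ι).symm
      have hcard : Fintype.card ι ≤ Module.finrank ℝ E + 1 :=
        hind.card_le_finrank_succ.trans (by gcongr; exact Submodule.finrank_le _)
      refine Set.mem_biUnion (x := Fintype.card ι) (by simp; omega)
        ⟨(w ∘ e, z ∘ e), ⟨⟨fun i => (hw₀ _).le, ?_⟩, fun i _ => hzK ⟨e i, rfl⟩⟩, ?_⟩
      · simpa [e, Equiv.sum_comp] using hw₁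
      · exact e.sum_comp fun i => w i • z i
    · simp only [Set.iUnion_subset_iff]
      rintro k - _ ⟨⟨w, z⟩, ⟨hw, hz⟩, rfl⟩
      exact (convex_convexHull ℝ K).sum_mem (fun i _ => hw.1 i) hw.2
        fun i _ => subset_convexHull ℝ K (hz i (Set.mem_univ i))
  rw [hull_eq]
  exact (Finset.range _).isCompact_biUnion fun k _ =>
    ((isCompact_stdSimplex _ _).prod (isCompact_univ_pi fun _ => hK)).image (by fun_prop)

theorem HasSum.matrix_mulVec {S m n R : Type*} [Fintype n] [Semiring R] [TopologicalSpace R]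
    [IsTopologicalSemiring R] {f : S → Matrix m n R} {A : Matrix m n R} (hf : HasSum f A)
    (v : n → R) : HasSum (fun s => f s *ᵥ v) (A *ᵥ v) :=
  hf.map (mulVec.addMonoidHomLeft v) (continuous_id.matrix_mulVec continuous_const)

theorem inv_sum_smul_mem_stdSimplex {ι : Type*} [Fintype ι] {a : ι → ℝ} (ha : 0 ≤ a)
    (h : ∑ k, a k ≠ 0) : (∑ k, a k)⁻¹ • a ∈ stdSimplex ℝ ι :=
  ⟨fun j => mul_nonneg (inv_nonneg.2 (Finset.sum_nonneg fun k _ => ha k)) (ha j),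
    by simp [← Finset.mul_sum, h]⟩

theorem diagonal_inv_mul_mulVec {ι : Type*} [Fintype ι] [DecidableEq ι] {d ρ w : ι → ℝ}
    {C : Matrix ι ι ℝ} (hd : ∀ i, d i ≠ 0) (h : C *ᵥ ρ = fun i => d i * w i) :
    (diagonal (fun i => (d i)⁻¹) * C) *ᵥ ρ = w := by
  ext i
  rw [← mulVec_mulVec, h, mulVec_diagonal, inv_mul_cancel_left₀ (hd i)]

namespace CompletelyPositive

variable {N : ℕ}

theorem sum_vecMulVec {T : Type*} [Fintype T] {x : T → Fin N → ℝ} (hx : ∀ m, 0 ≤ x m) :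
    CompletelyPositive (∑ m, vecMulVec (x m) (x m)) :=
  let e := (Fintype.equivFin T).symm
  ⟨Fintype.card T, x ∘ e, fun m => hx (e m), (e.sum_comp fun m => vecMulVec (x m) (x m)).symm⟩

theorem of_mem_convexHull {C : Matrix (Fin N) (Fin N) ℝ}
    (hC : C ∈ convexHull ℝ ((fun x => vecMulVec x x) '' {x | 0 ≤ x})) :
    CompletelyPositive C := by
  obtain ⟨T, _, w, z, hw₀, -, hz, rfl⟩ := mem_convexHull_iff_exists_fintype.1 hC
  choose x hx hxz using hz
  convert sum_vecMulVec (x := fun m => Real.sqrt (w m) • x m)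
    fun m => smul_nonneg (Real.sqrt_nonneg _) (hx m) using 2 with m
  rw [← hxz, smul_vecMulVec, vecMulVec_smul, smul_smul, Real.mul_self_sqrt (hw₀ m)]

end CompletelyPositive

section PosteriorMoment

variable {ι : Type*} [Fintype ι]

/-- For the vector `a` of joint probabilities of a signal this is `P(s) q qᵀ`, where
`P(s) = ∑ a` and `q = a / P(s)` is the posterior; it is `0` when `P(s) = 0`. -/
noncomputable def posteriorMoment (a : ι → ℝ) : Matrix ι ι ℝ :=
  (∑ k, a k)⁻¹ • vecMulVec a a

theorem posteriorMoment_mulVec_apply (a ρ : ι → ℝ) (i : ι) :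
    (posteriorMoment a *ᵥ ρ) i = a i * ∑ j, (a j / ∑ k, a k) * ρ j := by
  simp only [posteriorMoment, smul_mulVec, vecMulVec_mulVec, Pi.smul_apply, smul_eq_mul,
    dotProduct, Finset.mul_sum, MulOpposite.smul_eq_mul_unop, MulOpposite.unop_op]
  refine Finset.sum_congr rfl fun j _ => ?_
  ring

theorem posteriorMoment_mulVec_one {a : ι → ℝ} (ha : 0 ≤ a) :
    posteriorMoment a *ᵥ (fun _ => 1) = a := by
  ext i
  rw [posteriorMoment_mulVec_apply, ← Finset.sum_mul, ← Finset.sum_div]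
  rcases (Fintype.sum_nonneg ha).eq_or_lt with h | h
  · simp [(Fintype.sum_eq_zero_iff_of_nonneg ha).1 h.symm]
  · simp [h.ne']

theorem posteriorMoment_eq_smul_vecMulVec (a : ι → ℝ) :
    posteriorMoment a = (∑ k, a k) • vecMulVec ((∑ k, a k)⁻¹ • a) ((∑ k, a k)⁻¹ • a) := by
  rcases eq_or_ne (∑ k, a k) 0 with h | h
  · simp [posteriorMoment, h]
  · rw [posteriorMoment, smul_vecMulVec, vecMulVec_smul, smul_smul, smul_smul,
      mul_inv_cancel₀ h, one_mul]

theorem posteriorMoment_apply_nonneg {a : ι → ℝ} (ha : 0 ≤ a) (i j : ι) :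
    0 ≤ posteriorMoment a i j :=
  mul_nonneg (inv_nonneg.2 (Fintype.sum_nonneg ha)) (mul_nonneg (ha i) (ha j))

theorem posteriorMoment_apply_le {a : ι → ℝ} (ha : 0 ≤ a) (i j : ι) :
    posteriorMoment a i j ≤ a i := by
  have hj : a j ≤ ∑ k, a k := Finset.single_le_sum (fun k _ => ha k) (Finset.mem_univ j)
  simp only [posteriorMoment, Matrix.smul_apply, vecMulVec_apply, smul_eq_mul]
  rcases (Fintype.sum_nonneg ha).eq_or_lt with h | h
  · simpa [← h] using ha i
  · rw [inv_mul_le_iff₀ h, mul_comm (a i)]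
    exact mul_le_mul_of_nonneg_right hj (ha i)

theorem posteriorMoment_sum_smul_self {x : ι → ℝ} (hx : 0 ≤ x) :
    posteriorMoment ((∑ k, x k) • x) = vecMulVec x x := by
  rcases (Fintype.sum_nonneg hx).eq_or_lt with h | h
  · have hx0 : x = 0 := (Fintype.sum_eq_zero_iff_of_nonneg hx).1 h.symm
    simp [posteriorMoment, hx0]
  · simp only [posteriorMoment, Pi.smul_apply, smul_eq_mul, ← Finset.mul_sum, smul_vecMulVec,
      vecMulVec_smul, smul_smul]
    rw [inv_mul_cancel₀ (mul_ne_zero h.ne' h.ne'), one_smul]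

end PosteriorMoment

section InformationStructure

variable {ι S : Type*} (μ₀ ρ : ι → ℝ) (π : ι → S → ℝ)

def jointProb (s : S) : ι → ℝ := fun j => μ₀ j * π j s

variable {μ₀ π}

theorem jointProb_nonneg (hμ₀ : 0 ≤ μ₀) (hπ₀ : ∀ i s, 0 ≤ π i s) (s : S) :
    0 ≤ jointProb μ₀ π s :=
  fun j => mul_nonneg (hμ₀ j) (hπ₀ j s)

theorem hasSum_jointProb (hπ₁ : ∀ i, HasSum (π i) 1) : HasSum (jointProb μ₀ π) μ₀ :=
  Pi.hasSum.2 fun j => by simpa [jointProb] using (hπ₁ j).mul_left (μ₀ j)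

variable [Fintype ι]

variable (μ₀ π) in
noncomputable def interimPayoff (i : ι) : ℝ :=
  ∑' s, π i s * ∑ j, (μ₀ j * π j s / ∑ k, μ₀ k * π k s) * ρ j

variable (μ₀ π) in
theorem posteriorMoment_jointProb_mulVec_apply (s : S) (i : ι) :
    (posteriorMoment (jointProb μ₀ π s) *ᵥ ρ) i =
      μ₀ i * (π i s * ∑ j, (μ₀ j * π j s / ∑ k, μ₀ k * π k s) * ρ j) := by
  rw [posteriorMoment_mulVec_apply]
  simp only [jointProb, mul_assoc]

theorem summable_posteriorMoment_jointProb (hμ₀ : 0 ≤ μ₀) (hπ₀ : ∀ i s, 0 ≤ π i s)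
    (hπ : ∀ i, Summable (π i)) : Summable fun s => posteriorMoment (jointProb μ₀ π s) := by
  have ha := jointProb_nonneg hμ₀ hπ₀
  refine Pi.summable.2 fun i => Pi.summable.2 fun j => ?_
  exact ((hπ i).mul_left (μ₀ i)).of_nonneg_of_le
    (fun s => posteriorMoment_apply_nonneg (ha s) i j) fun s => posteriorMoment_apply_le (ha s) i j

theorem tsum_posteriorMoment_jointProb_mulVec_one (hμ₀ : 0 ≤ μ₀) (hπ₀ : ∀ i s, 0 ≤ π i s)
    (hπ₁ : ∀ i, HasSum (π i) 1) :
    (∑' s, posteriorMoment (jointProb μ₀ π s)) *ᵥ (fun _ => 1) = μ₀ := by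
  have hB := summable_posteriorMoment_jointProb hμ₀ hπ₀ fun i => (hπ₁ i).summable
  refine (hB.hasSum.matrix_mulVec _).unique ?_
  simpa only [posteriorMoment_mulVec_one (jointProb_nonneg hμ₀ hπ₀ _)] using hasSum_jointProb hπ₁

theorem tsum_posteriorMoment_jointProb_mulVec
    (hB : Summable fun s => posteriorMoment (jointProb μ₀ π s)) :
    (∑' s, posteriorMoment (jointProb μ₀ π s)) *ᵥ ρ =
      fun i => μ₀ i * interimPayoff μ₀ ρ π i := by
  ext i
  rw [← (Pi.hasSum.1 (hB.hasSum.matrix_mulVec ρ) i).tsum_eq, interimPayoff, ← tsum_mul_left]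
  simp only [posteriorMoment_jointProb_mulVec_apply]

theorem completelyPositive_tsum_posteriorMoment_jointProb {N : ℕ} {μ₀ : Fin N → ℝ}
    {π : Fin N → S → ℝ} (hμ₀ : 0 ≤ μ₀) (h₀sum : ∑ i, μ₀ i = 1) (hπ₀ : ∀ i s, 0 ≤ π i s)
    (hπ₁ : ∀ i, HasSum (π i) 1) :
    CompletelyPositive (∑' s, posteriorMoment (jointProb μ₀ π s)) := by
  have ha := jointProb_nonneg hμ₀ hπ₀
  have hsignal : HasSum (fun s => ∑ k, jointProb μ₀ π s k) 1 := by
    simpa [h₀sum] using hasSum_sum (s := Finset.univ) fun k _ =>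
      Pi.hasSum.1 (hasSum_jointProb (μ₀ := μ₀) hπ₁) k
  apply CompletelyPositive.of_mem_convexHull
  refine convexHull_mono (Set.image_mono fun q (hq : q ∈ stdSimplex ℝ (Fin N)) => hq.1) ?_
  refine (convex_convexHull ℝ _).mem_of_hasSum
    (isCompact_convexHull_of_isCompact ((isCompact_stdSimplex ℝ _).image (by fun_prop))).isClosed
    (fun s => Fintype.sum_nonneg (ha s)) hsignal
    (fun s hs => subset_convexHull ℝ _ ⟨_, inv_sum_smul_mem_stdSimplex (ha s) hs, rfl⟩) ?_
  simpa only [← posteriorMoment_eq_smul_vecMulVec] using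
    (summable_posteriorMoment_jointProb hμ₀ hπ₀ fun i => (hπ₁ i).summable).hasSum

end InformationStructure

theorem CompletelyPositive.exists_sum_posteriorMoment_eq {N : ℕ} {μ₀ : Fin N → ℝ}
    {C : Matrix (Fin N) (Fin N) ℝ} (hμ₀ : ∀ i, 0 < μ₀ i) (hC : CompletelyPositive C)
    (hrow : C *ᵥ (fun _ => 1) = μ₀) :
    ∃ (M : ℕ) (π : Fin N → Fin M → ℝ), (∀ i m, 0 ≤ π i m) ∧ (∀ i, HasSum (π i) 1) ∧
      C = ∑ m, posteriorMoment (jointProb μ₀ π m) := by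
  obtain ⟨M, x, hx, rfl⟩ := hC
  set π : Fin N → Fin M → ℝ := fun i m => x m i * (∑ k, x m k) / μ₀ i
  have hπ₀ : ∀ i m, 0 ≤ π i m := fun i m =>
    div_nonneg (mul_nonneg (hx m i) (Fintype.sum_nonneg (hx m))) (hμ₀ i).le
  have hB : ∀ m, posteriorMoment (jointProb μ₀ π m) = vecMulVec (x m) (x m) := by
    intro m
    convert posteriorMoment_sum_smul_self (hx m) using 2
    ext j
    simp [π, jointProb, mul_div_cancel₀ _ (hμ₀ j).ne', mul_comm]
  have hjoint : ∑ m, jointProb μ₀ π m = μ₀ := by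
    simpa only [sum_mulVec, ← hB,
      posteriorMoment_mulVec_one (jointProb_nonneg (fun j => (hμ₀ j).le) hπ₀ _)] using hrow
  refine ⟨M, π, hπ₀, fun i => ?_, by simp only [hB]⟩
  have hi : μ₀ i * ∑ m, π i m = μ₀ i := by
    simpa only [Finset.sum_apply, jointProb, ← Finset.mul_sum] using congrFun hjoint i
  convert hasSum_fintype (π i)
  exact ((mul_eq_left₀ (hμ₀ i).ne').1 hi).symm

theorem stmt5_general {N : ℕ} (μ₀ ρ : Fin N → ℝ)
    (h₀pos : ∀ i, 0 < μ₀ i) (h₀sum : ∑ i, μ₀ i = 1)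
    (v : Fin N → ℝ) :
    (∃ (S : Type) (_ : Countable S) (π : Fin N → S → ℝ),
        (∀ i s, 0 ≤ π i s) ∧ (∀ i, HasSum (π i) 1) ∧
        ∀ i, v i = ∑' s, π i s *
          ∑ j, (μ₀ j * π j s / ∑ k, μ₀ k * π k s) * ρ j)
      ↔ ∃ C : Matrix (Fin N) (Fin N) ℝ,
          CompletelyPositive C ∧
          C.mulVec (fun _ => 1) = μ₀ ∧
          v = (Matrix.diagonal (fun i => (μ₀ i)⁻¹) * C).mulVec ρ := by
  have hμ₀ : 0 ≤ μ₀ := fun i => (h₀pos i).le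
  have hμ₀_ne : ∀ i, μ₀ i ≠ 0 := fun i => (h₀pos i).ne'
  constructor
  · rintro ⟨S, -, π, hπ₀, hπ₁, hv⟩
    have hB := summable_posteriorMoment_jointProb hμ₀ hπ₀ fun i => (hπ₁ i).summable
    refine ⟨∑' s, posteriorMoment (jointProb μ₀ π s),
      completelyPositive_tsum_posteriorMoment_jointProb hμ₀ h₀sum hπ₀ hπ₁,
      tsum_posteriorMoment_jointProb_mulVec_one hμ₀ hπ₀ hπ₁, ?_⟩
    rw [diagonal_inv_mul_mulVec hμ₀_ne (tsum_posteriorMoment_jointProb_mulVec ρ hB)]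
    exact funext hv
  · rintro ⟨C, hC, hrow, rfl⟩
    obtain ⟨M, π, hπ₀, hπ₁, rfl⟩ := hC.exists_sum_posteriorMoment_eq h₀pos hrow
    refine ⟨Fin M, inferInstance, π, hπ₀, hπ₁, fun i => ?_⟩
    have hCρ := tsum_posteriorMoment_jointProb_mulVec (μ₀ := μ₀) (π := π) ρ .of_finite
    rw [tsum_fintype] at hCρ
    rw [diagonal_inv_mul_mulVec hμ₀_ne hCρ]
    rfl

/-- Linear (expected reputation) payoffs: `v` is an interim payoff profile iff
`v = D₀ C ρ` for a completely positive matrix `C` with row sums `μ₀`. -/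
theorem stmt5 {N : ℕ} (hN : 0 < N) (μ₀ ρ : Fin N → ℝ)
    (h₀pos : ∀ i, 0 < μ₀ i) (h₀sum : ∑ i, μ₀ i = 1)
    (v : Fin N → ℝ) :
    (∃ (S : Type) (_ : Countable S) (π : Fin N → S → ℝ),
        (∀ i s, 0 ≤ π i s) ∧ (∀ i, HasSum (π i) 1) ∧
        ∀ i, v i = ∑' s, π i s *
          ∑ j, (μ₀ j * π j s / ∑ k, μ₀ k * π k s) * ρ j)
      ↔ ∃ C : Matrix (Fin N) (Fin N) ℝ,
          CompletelyPositive C ∧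
          C.mulVec (fun _ => 1) = μ₀ ∧
          v = (Matrix.diagonal (fun i => (μ₀ i)⁻¹) * C).mulVec ρ :=
  stmt5_general μ₀ ρ h₀pos h₀sum v
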